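/- Let D be an r×c matrix over an abelian group G of order s in which, for all pairs of distinct rows, the entrywise difference of the rows contains each element of G exactly c/s times (a difference scheme D(r,c,s)). Then r ≤ c. -/

import Mathlib

/-!
Pick a nontrivial character `ψ` of `G` and send row `μ` of `D` to the vector
`(ψ (D μ k))ₖ ∈ ℂ^c`. The inner product of the vectors of rows `μ ≠ ν` is
`∑ₖ ψ (D ν k - D μ k)`; every value of `G` occurs equally often among these differences,
so the sum is a multiple of `∑_{g ∈ G} ψ g = 0`. Hence the `r` row vectors are nonzero and
pairwise orthogonal in `ℂ^c`, and `r ≤ c`.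
-/

open Finset Classical

namespace AddChar

lemma sum_apply_comp_eq_zero {G R ι : Type*} [AddGroup G] [Fintype G] [CommSemiring R]
    [IsDomain R] [CharZero R] [Fintype ι] {ψ : AddChar G R} (hψ : ψ ≠ 0) {e : ι → G} {m : ℕ}
    (he : ∀ g, #{k | e k = g} = m) : ∑ k, ψ (e k) = 0 := by
  rw [← sum_fiberwise univ e (fun k => ψ (e k))]
  calc ∑ g, ∑ k with e k = g, ψ (e k) = ∑ g, (m : R) * ψ g := by
        refine sum_congr rfl fun g _ => ?_
        rw [sum_congr rfl fun k hk => by rw [(mem_filter.1 hk).2], sum_const, he, nsmul_eq_mul]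
    _ = 0 := by rw [← mul_sum, sum_eq_zero_iff_ne_zero.2 hψ, mul_zero]

variable {G ι : Type*} [AddCommGroup G]

lemma inner_toLp_comp [Finite G] [Fintype ι] (ψ : AddChar G ℂ) (x y : ι → G) :
    inner ℂ (WithLp.toLp 2 (ψ ∘ x)) (WithLp.toLp 2 (ψ ∘ y)) = ∑ k, ψ (y k - x k) := by
  rw [PiLp.inner_apply]
  refine sum_congr rfl fun k _ => ?_
  simp only [Function.comp_apply, RCLike.inner_apply]
  rw [← map_neg_eq_conj, sub_eq_add_neg, map_add_eq_mul]

lemma toLp_comp_ne_zero [Nonempty ι] (ψ : AddChar G ℂ) (x : ι → G) :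
    WithLp.toLp 2 (ψ ∘ x) ≠ 0 := by
  obtain ⟨k⟩ := ‹Nonempty ι›
  intro h
  have hψx : ψ (x k) = 0 := congrFun (congrArg WithLp.ofLp h) k
  simpa [hψx] using (ψ.map_add_eq_mul (x k) (-x k)).symm

end AddChar

/-- Jungnickel's bound: if D is an r×c difference scheme over a finite
abelian group G of order s ≥ 2 — every entrywise difference of two distinct rows contains
each element of G exactly c/s times — then r ≤ c. -/
theorem difference_scheme_row_bound
    {G : Type*} [AddCommGroup G] [Fintype G]
    (s : ℕ) (hs : Fintype.card G = s) (hs2 : 2 ≤ s)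
    (r c : ℕ) (hc : 0 < c)
    (D : Fin r → Fin c → G)
    (hD : ∀ μ ν : Fin r, μ ≠ ν → ∀ g : G,
        s * (Finset.univ.filter (fun k => D μ k - D ν k = g)).card = c) :
    r ≤ c := by
  have : Nontrivial G := Fintype.one_lt_card_iff_nontrivial.1 (by omega)
  have : Nonempty (Fin c) := ⟨⟨0, hc⟩⟩
  obtain ⟨a, ha⟩ := exists_ne (0 : G)
  obtain ⟨ψ, hψa⟩ := AddChar.exists_apply_ne_zero.2 ha
  have hψ : ψ ≠ 0 := AddChar.ne_zero_iff.2 ⟨a, hψa⟩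
  have hrows : LinearIndependent ℂ fun μ => WithLp.toLp 2 (ψ ∘ D μ) := by
    refine linearIndependent_of_ne_zero_of_inner_eq_zero
      (fun μ => ψ.toLp_comp_ne_zero (D μ)) fun μ ν hμν => ?_
    exact (ψ.inner_toLp_comp _ _).trans <| AddChar.sum_apply_comp_eq_zero hψ fun g =>
      (Nat.div_eq_of_eq_mul_right (by omega) (hD ν μ (Ne.symm hμν) g).symm).symm
  simpa using hrows.fintype_card_le_finrank
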